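/- Let σ > 0, m ≥ 1, and θ_i, θ_c ∈ ℝ. Let F : ℝ × ℝ → ℝ be bounded and measurable, and let the m sample pairs (ε_i^k, ε_c^k), k = 1, …, m, be i.i.d., each pair distributed as the product measure (gaussianReal 0 σ²) × (gaussianReal 0 σ²). Let q denote the Gaussian density gaussianPDFReal 0 σ. Then the rescaled co-evolutionary gradient estimator g = (1/(m σ²)) · Σ_{k=1}^m F(θ_i + ε_i^k, θ_c + ε_c^k) · ε_i^k · q(ε_c^k) is unbiased for the rectified gradient: its expectation equals the derivative at θ_i of the map θ ↦ ∫∫ F(θ + x, θ_c + y) · q(y) d(gaussianReal 0 σ²)(x) d(gaussianReal 0 σ²)(y). -/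

import Mathlib

/-!
The samples are i.i.d., so the estimator has expectation `σ⁻² 𝔼[F(θᵢ + ε, θc + ε') ε q(ε')]`.
Integrating out `ε'` first turns this into `σ⁻² 𝔼[ε G(θᵢ + ε)]` for the bounded function
`G u = 𝔼[F(u, θc + ε') q(ε')]`, and by Fubini the objective is
`t ↦ 𝔼[G(t + ε)] = ∫ G(u) φ_{t,σ²}(u) du`. Differentiating the Gaussian density in its mean,
`∂ₜ φ_{t,σ²}(u) = (u - t) / σ² · φ_{t,σ²}(u)`, under the integral sign (dominated convergence,
as `G` is bounded) gives the score-function identity `d/dt 𝔼[G(t + ε)] = σ⁻² 𝔼[ε G(t + ε)]`.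
-/

open MeasureTheory ProbabilityTheory
open Real
open scoped NNReal

section GaussianSmoothing

variable {v : ℝ≥0}

lemma gaussianPDFReal_le (μ : ℝ) (v : ℝ≥0) (x : ℝ) :
    gaussianPDFReal μ v x ≤ (√(2 * π * v))⁻¹ := by
  rw [gaussianPDFReal]
  refine mul_le_of_le_one_right (by positivity) (exp_le_one_iff.mpr ?_)
  exact div_nonpos_of_nonpos_of_nonneg (neg_nonpos.2 (sq_nonneg _)) (by positivity)

lemma abs_mul_gaussianPDFReal_le {a C : ℝ} (ha : |a| ≤ C) (μ : ℝ) (v : ℝ≥0) (x : ℝ) :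
    |a * gaussianPDFReal μ v x| ≤ C * (√(2 * π * v))⁻¹ := by
  rw [abs_mul, abs_of_nonneg (gaussianPDFReal_nonneg _ _ _)]
  exact mul_le_mul ha (gaussianPDFReal_le _ _ _) (gaussianPDFReal_nonneg _ _ _)
    ((abs_nonneg _).trans ha)

lemma hasDerivAt_gaussianPDFReal_mean (v : ℝ≥0) (u t : ℝ) :
    HasDerivAt (fun s => gaussianPDFReal s v u) ((u - t) / v * gaussianPDFReal t v u) t := by
  have hexponent : HasDerivAt (fun s => -(u - s) ^ 2 / (2 * v)) ((u - t) / v) t :=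
    ((((hasDerivAt_id t).const_sub u).pow 2).neg.div_const (2 * (v : ℝ))).congr_deriv
      (by simp only [id]; ring)
  exact (hexponent.exp.const_mul (√(2 * π * v))⁻¹).congr_deriv
    (by rw [gaussianPDFReal_def]; ring)

lemma gaussianPDFReal_le_of_abs_sub_le_one {t θ : ℝ} (h : |t - θ| ≤ 1) (u : ℝ) :
    gaussianPDFReal t v u ≤
      (√(2 * π * v))⁻¹ * (exp (1 / (2 * v)) * exp (-(4 * v : ℝ)⁻¹ * (u - θ) ^ 2)) := by
  rw [gaussianPDFReal, ← exp_add]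
  gcongr
  have hsq : (u - θ) ^ 2 ≤ 2 * (u - t) ^ 2 + 2 := by
    nlinarith [sq_nonneg (u - t - (t - θ)), sq_abs (t - θ), abs_nonneg (t - θ)]
  calc -(u - t) ^ 2 / (2 * v) = -(2 * (u - t) ^ 2) / (4 * v) := by ring
    _ ≤ (2 - (u - θ) ^ 2) / (4 * v) := by gcongr; linarith
    _ = 1 / (2 * v) + -(4 * v : ℝ)⁻¹ * (u - θ) ^ 2 := by ring

lemma integrable_abs_add_one_mul_exp_neg_mul_sq {b : ℝ} (hb : 0 < b) :
    Integrable fun x : ℝ => (|x| + 1) * exp (-b * x ^ 2) := by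
  have habs : Integrable fun x : ℝ => |x| * exp (-b * x ^ 2) :=
    (integrable_mul_exp_neg_mul_sq hb).norm.congr
      (.of_forall fun x => by simp [abs_of_pos (exp_pos _)])
  refine (habs.add (integrable_exp_neg_mul_sq hb)).congr (.of_forall fun x => ?_)
  simp only [Pi.add_apply]
  ring

lemma integral_comp_const_add_gaussianReal (hv : v ≠ 0) (t : ℝ) (f : ℝ → ℝ) :
    ∫ x, f (t + x) ∂gaussianReal 0 v = ∫ u, gaussianPDFReal t v u * f u := by
  have := (Homeomorph.addLeft t).measurableEmbedding.integral_map (μ := gaussianReal 0 v) f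
  simp only [Homeomorph.coe_addLeft] at this
  rw [← this, gaussianReal_map_const_add, zero_add, integral_gaussianReal_eq_integral_smul hv]
  rfl

lemma norm_sub_div_mul_gaussianPDFReal_mul_le {a C : ℝ} (ha : |a| ≤ C) {t θ : ℝ}
    (h : |t - θ| ≤ 1) (u : ℝ) :
    ‖(u - t) / v * gaussianPDFReal t v u * a‖ ≤
      C / v * ((√(2 * π * v))⁻¹ * exp (1 / (2 * v))) *
        ((|u - θ| + 1) * exp (-(4 * v : ℝ)⁻¹ * (u - θ) ^ 2)) := by
  have hC : 0 ≤ C := (abs_nonneg a).trans ha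
  have hut : |u - t| ≤ |u - θ| + 1 :=
    calc |u - t| ≤ |u - θ| + |t - θ| := by
          simpa only [sub_sub_sub_cancel_right] using abs_sub (u - θ) (t - θ)
      _ ≤ |u - θ| + 1 := by gcongr
  rw [Real.norm_eq_abs, abs_mul, abs_mul, abs_div, NNReal.abs_eq,
    abs_of_nonneg (gaussianPDFReal_nonneg _ _ _)]
  calc |u - t| / v * gaussianPDFReal t v u * |a|
      ≤ (|u - θ| + 1) / v *
          ((√(2 * π * v))⁻¹ * (exp (1 / (2 * v)) * exp (-(4 * v : ℝ)⁻¹ * (u - θ) ^ 2))) * C := by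
        gcongr
        exacts [gaussianPDFReal_nonneg _ _ _, gaussianPDFReal_le_of_abs_sub_le_one h u]
    _ = _ := by ring

theorem hasDerivAt_integral_gaussianPDFReal_mul (hv : v ≠ 0) {G : ℝ → ℝ} (hG : Measurable G)
    {C : ℝ} (hC : ∀ u, |G u| ≤ C) (θ : ℝ) :
    HasDerivAt (fun t => ∫ u, gaussianPDFReal t v u * G u)
      (∫ u, (u - θ) / v * gaussianPDFReal θ v u * G u) θ := by
  have hbound_int : Integrable fun u => C / v * ((√(2 * π * v))⁻¹ * exp (1 / (2 * v))) *
      ((|u - θ| + 1) * exp (-(4 * v : ℝ)⁻¹ * (u - θ) ^ 2)) :=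
    ((integrable_abs_add_one_mul_exp_neg_mul_sq (by positivity)).comp_sub_right θ).const_mul _
  have hmeas : ∀ t, AEStronglyMeasurable (fun u => gaussianPDFReal t v u * G u) :=
    fun t => ((measurable_gaussianPDFReal t v).mul hG).aestronglyMeasurable
  have hint : Integrable fun u => gaussianPDFReal θ v u * G u :=
    (integrable_gaussianPDFReal θ v).mul_bdd hG.aestronglyMeasurable (.of_forall hC)
  have hderiv_meas : AEStronglyMeasurable fun u => (u - θ) / v * gaussianPDFReal θ v u * G u :=
    ((measurable_id.sub_const θ).div_const _ |>.mul (measurable_gaussianPDFReal θ v)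
      |>.mul hG).aestronglyMeasurable
  exact (hasDerivAt_integral_of_dominated_loc_of_deriv_le (Metric.ball_mem_nhds θ one_pos)
    (.of_forall hmeas) hint hderiv_meas
    (.of_forall fun u t ht => norm_sub_div_mul_gaussianPDFReal_mul_le (hC u)
      (Metric.mem_ball.mp ht).le u)
    hbound_int
    (.of_forall fun u t _ => (hasDerivAt_gaussianPDFReal_mean v u t).mul_const (G u))).2

theorem hasDerivAt_integral_comp_const_add_gaussianReal (hv : v ≠ 0) {G : ℝ → ℝ}
    (hG : Measurable G) {C : ℝ} (hC : ∀ u, |G u| ≤ C) (θ : ℝ) :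
    HasDerivAt (fun t => ∫ x, G (t + x) ∂gaussianReal 0 v)
      ((v : ℝ)⁻¹ * ∫ x, x * G (θ + x) ∂gaussianReal 0 v) θ := by
  have hvalue : (v : ℝ)⁻¹ * ∫ x, x * G (θ + x) ∂gaussianReal 0 v
      = ∫ u, (u - θ) / v * gaussianPDFReal θ v u * G u :=
    calc (v : ℝ)⁻¹ * ∫ x, x * G (θ + x) ∂gaussianReal 0 v
        = ∫ x, (fun u => (u - θ) / v * G u) (θ + x) ∂gaussianReal 0 v := by
          rw [← integral_const_mul]
          congr with x
          simp only [add_sub_cancel_left]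
          ring
      _ = ∫ u, gaussianPDFReal θ v u * ((u - θ) / v * G u) :=
          integral_comp_const_add_gaussianReal hv θ fun u => (u - θ) / v * G u
      _ = ∫ u, (u - θ) / v * gaussianPDFReal θ v u * G u := by
          congr with u
          ring
  rw [hvalue]
  simpa only [integral_comp_const_add_gaussianReal hv] using
    hasDerivAt_integral_gaussianPDFReal_mul hv hG hC θ

end GaussianSmoothing

section BoundedIntegrands

variable {α β : Type*} [MeasurableSpace α] [MeasurableSpace β]
  {μ : Measure α} {ν : Measure β} [IsFiniteMeasure ν]

lemma integral_integral_swap_of_bound [IsFiniteMeasure μ] {f : α × β → ℝ} (hf : Measurable f)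
    {C : ℝ} (hC : ∀ p, |f p| ≤ C) :
    ∫ y, ∫ x, f (x, y) ∂μ ∂ν = ∫ x, ∫ y, f (x, y) ∂ν ∂μ := by
  refine integral_integral_swap (Integrable.of_bound ?_ C (.of_forall fun p => hC p.swap))
  exact (hf.comp measurable_swap).aestronglyMeasurable

lemma integrable_prod_fst_mul_of_bound {g : α → ℝ} (hg : Integrable g μ) {f : α × β → ℝ}
    (hf : Measurable f) {C : ℝ} (hC : ∀ p, |f p| ≤ C) :
    Integrable (fun p => g p.1 * f p) (μ.prod ν) :=
  (hg.comp_fst ν).mul_bdd hf.aestronglyMeasurable (.of_forall hC)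

lemma integral_prod_fst_mul_of_bound [SFinite μ] {g : α → ℝ} (hg : Integrable g μ)
    {f : α × β → ℝ} (hf : Measurable f) {C : ℝ} (hC : ∀ p, |f p| ≤ C) :
    ∫ p, g p.1 * f p ∂(μ.prod ν) = ∫ x, g x * ∫ y, f (x, y) ∂ν ∂μ := by
  rw [integral_prod _ (integrable_prod_fst_mul_of_bound hg hf hC)]
  simp only [integral_const_mul]

end BoundedIntegrands

lemma integral_sum_comp_eval_pi {α ι E : Type*} [MeasurableSpace α] [Fintype ι]
    [NormedAddCommGroup E] [NormedSpace ℝ E] {μ : Measure α} [IsProbabilityMeasure μ]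
    {f : α → E} (hf : Integrable f μ) :
    ∫ ω, ∑ i, f (ω i) ∂Measure.pi (fun _ : ι => μ) = Fintype.card ι • ∫ x, f x ∂μ := by
  rw [integral_finsetSum _ fun i _ => integrable_comp_eval hf]
  simp only [integral_comp_eval (μ := fun _ : ι => μ) hf.aestronglyMeasurable, Finset.sum_const,
    Finset.card_univ]

section ConfidenceMarginal

variable {F : ℝ × ℝ → ℝ} {θc : ℝ} {v : ℝ≥0} {C : ℝ}

noncomputable def confidenceMarginal (F : ℝ × ℝ → ℝ) (θc : ℝ) (v : ℝ≥0) (u : ℝ) : ℝ :=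
  ∫ y, F (u, θc + y) * gaussianPDFReal 0 v y ∂gaussianReal 0 v

lemma measurable_comp_add_mul_gaussianPDFReal (hF : Measurable F) (θ : ℝ) :
    Measurable fun p : ℝ × ℝ => F (θ + p.1, θc + p.2) * gaussianPDFReal 0 v p.2 := by
  have := measurable_gaussianPDFReal 0 v
  fun_prop

lemma measurable_confidenceMarginal (hF : Measurable F) :
    Measurable (confidenceMarginal F θc v) := by
  have h := (measurable_comp_add_mul_gaussianPDFReal (θc := θc) (v := v) hF 0).stronglyMeasurable
    |>.integral_prod_right' (ν := gaussianReal 0 v) |>.measurable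
  simp only [zero_add] at h
  exact h

lemma abs_confidenceMarginal_le (hC : ∀ p, |F p| ≤ C) (u : ℝ) :
    |confidenceMarginal F θc v u| ≤ C * (√(2 * π * v))⁻¹ := by
  simpa [confidenceMarginal] using norm_integral_le_of_norm_le_const (μ := gaussianReal 0 v)
    (f := fun y => F (u, θc + y) * gaussianPDFReal 0 v y)
    (.of_forall fun y => abs_mul_gaussianPDFReal_le (hC (u, θc + y)) 0 v y)

lemma integral_integral_eq_integral_confidenceMarginal (hF : Measurable F)
    (hC : ∀ p, |F p| ≤ C) (t : ℝ) :
    ∫ y, ∫ x, F (t + x, θc + y) * gaussianPDFReal 0 v y ∂gaussianReal 0 v ∂gaussianReal 0 v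
      = ∫ x, confidenceMarginal F θc v (t + x) ∂gaussianReal 0 v :=
  integral_integral_swap_of_bound (measurable_comp_add_mul_gaussianPDFReal hF t)
    fun p => abs_mul_gaussianPDFReal_le (hC _) 0 v p.2

lemma mul_fst_mul_gaussianPDFReal_snd_eq (θ : ℝ) :
    (fun p : ℝ × ℝ => F (θ + p.1, θc + p.2) * p.1 * gaussianPDFReal 0 v p.2)
      = fun p => p.1 * (F (θ + p.1, θc + p.2) * gaussianPDFReal 0 v p.2) := by
  funext p
  ring

lemma integrable_mul_fst_mul_gaussianPDFReal_snd (hF : Measurable F) (hC : ∀ p, |F p| ≤ C)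
    (θ : ℝ) :
    Integrable (fun p : ℝ × ℝ => F (θ + p.1, θc + p.2) * p.1 * gaussianPDFReal 0 v p.2)
      ((gaussianReal 0 v).prod (gaussianReal 0 v)) := by
  rw [mul_fst_mul_gaussianPDFReal_snd_eq]
  exact integrable_prod_fst_mul_of_bound (memLp_one_iff_integrable.mp (memLp_id_gaussianReal 1))
    (measurable_comp_add_mul_gaussianPDFReal hF θ)
    fun p => abs_mul_gaussianPDFReal_le (hC _) 0 v p.2

lemma integral_mul_fst_mul_gaussianPDFReal_snd (hF : Measurable F) (hC : ∀ p, |F p| ≤ C)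
    (θ : ℝ) :
    ∫ p : ℝ × ℝ, F (θ + p.1, θc + p.2) * p.1 * gaussianPDFReal 0 v p.2
        ∂(gaussianReal 0 v).prod (gaussianReal 0 v)
      = ∫ x, x * confidenceMarginal F θc v (θ + x) ∂gaussianReal 0 v := by
  rw [mul_fst_mul_gaussianPDFReal_snd_eq]
  exact integral_prod_fst_mul_of_bound (memLp_one_iff_integrable.mp (memLp_id_gaussianReal 1))
    (measurable_comp_add_mul_gaussianPDFReal hF θ)
    fun p => abs_mul_gaussianPDFReal_le (hC _) 0 v p.2

end ConfidenceMarginal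

/-- Unbiasedness of the rescaled co-evolutionary gradient estimator: with `m` i.i.d. sample
pairs `(ε_i^k, ε_c^k) ∼ N(0,σ²) × N(0,σ²)` and `q` the `N(0,σ²)` Gaussian density, the
estimator `g = (1/(mσ²)) Σ_k F(θ_i + ε_i^k, θ_c + ε_c^k) · ε_i^k · q(ε_c^k)` has expectation
equal to the derivative at `θ_i` of
`θ ↦ ∫∫ F(θ + x, θ_c + y) · q(y) d(gaussianReal 0 σ²)(x) d(gaussianReal 0 σ²)(y)`. -/
theorem rescaled_coevolutionary_gradient_unbiased
    (σ : ℝ) (hσ : 0 < σ) (m : ℕ) (hm : 1 ≤ m) (θi θc : ℝ)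
    (F : ℝ × ℝ → ℝ) (hF_meas : Measurable F) (hF_bdd : ∃ C : ℝ, ∀ p, |F p| ≤ C) :
    ∫ ω : Fin m → ℝ × ℝ,
        (1 / (m * σ ^ 2)) *
          ∑ k : Fin m,
            F (θi + (ω k).1, θc + (ω k).2) * (ω k).1 *
              gaussianPDFReal 0 (Real.toNNReal (σ ^ 2)) (ω k).2
        ∂(Measure.pi fun _ : Fin m =>
            (gaussianReal 0 (Real.toNNReal (σ ^ 2))).prod
              (gaussianReal 0 (Real.toNNReal (σ ^ 2))))
      =
      deriv
        (fun t : ℝ =>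
          ∫ y, ∫ x, F (t + x, θc + y) * gaussianPDFReal 0 (Real.toNNReal (σ ^ 2)) y
            ∂(gaussianReal 0 (Real.toNNReal (σ ^ 2)))
            ∂(gaussianReal 0 (Real.toNNReal (σ ^ 2)))) θi := by
  obtain ⟨C, hC⟩ := hF_bdd
  set v : ℝ≥0 := (σ ^ 2).toNNReal
  have hv : v ≠ 0 := by simpa [v] using hσ.ne'
  have hv_eq : (v : ℝ) = σ ^ 2 := Real.coe_toNNReal _ (sq_nonneg σ)
  have hm₀ : (m : ℝ) ≠ 0 := Nat.cast_ne_zero.mpr (Nat.one_le_iff_ne_zero.mp hm)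
  have hderiv := hasDerivAt_integral_comp_const_add_gaussianReal hv
    (measurable_confidenceMarginal (θc := θc) (v := v) hF_meas) (abs_confidenceMarginal_le hC) θi
  have hsample := integrable_mul_fst_mul_gaussianPDFReal_snd (θc := θc) (v := v) hF_meas hC θi
  simp only [integral_integral_eq_integral_confidenceMarginal hF_meas hC, hderiv.deriv,
    integral_const_mul, integral_sum_comp_eval_pi hsample,
    integral_mul_fst_mul_gaussianPDFReal_snd hF_meas hC, Fintype.card_fin, nsmul_eq_mul, hv_eq]
  field_simp
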